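/- arXiv:2505.23225 — 4 statements merged into one kernel-verified Lean document; each statement's English description precedes it below -/
import Mathlib

section
/- (ε-VCP for Linear Models Under Uniform Perturbation Distribution.) Let n ≥ 1, let u ∈ ℝ^n be a unit vector, and let 0 < γ < ε. Then the ratio of Lebesgue volumes Vol({r ∈ ℝ^n : ‖r‖ ≤ ε and ⟨r, u⟩ ≥ γ}) / Vol({r ∈ ℝ^n : γ ≤ ‖r‖ < ε}) equals (1/2) · ε^n / (ε^n − γ^n) · I(1 − (γ/ε)²; (n+1)/2, 1/2). Equivalently, if a perturbation r is drawn uniformly from the shell {r : γ ≤ ‖r‖ < ε}, the probability that ⟨r, u⟩ ≥ γ equals this quantity. -/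
/-!
Rotating `u` to the first coordinate axis and slicing along it (Fubini), the cap
`{‖x‖ ≤ R, a ≤ x₀}` in `ℝ^(m+1)` has volume `vol(Bᵐ) · ∫ₐᴿ (R² - t²)^(m/2) dt`, and the unit
ball is the cap with `a = -1`. The shell has volume `(εⁿ - γⁿ) · vol(Bⁿ)` by scaling, so
`vol(Bᵐ)` cancels in the ratio, and the substitution `s = 1 - t²` identifies
`2 ∫_c^1 (1 - t²)^(m/2) dt` with the incomplete Beta integral `∫₀^(1-c²) s^(m/2) (1 - s)^(-1/2) ds`.
-/

open RealInnerProductSpace MeasureTheory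

/-- The Euler Beta function `B(a, b) = ∫₀¹ t^(a-1) (1-t)^(b-1) dt`. -/
noncomputable def eulerBeta (a b : ℝ) : ℝ :=
  ∫ t in (0 : ℝ)..1, t ^ (a - 1) * (1 - t) ^ (b - 1)

/-- The regularized incomplete Beta function
`I(x; a, b) = (∫₀ˣ t^(a-1) (1-t)^(b-1) dt) / B(a, b)`. -/
noncomputable def regIncBeta (x a b : ℝ) : ℝ :=
  (∫ t in (0 : ℝ)..x, t ^ (a - 1) * (1 - t) ^ (b - 1)) / eulerBeta a b

open Set Metric Module

lemma EuclideanSpace.norm_le_iff_sum_sq_le {ι : Type*} [Fintype ι] {R : ℝ} (hR : 0 ≤ R)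
    (x : EuclideanSpace ℝ ι) : ‖x‖ ≤ R ↔ ∑ i, x i ^ 2 ≤ R ^ 2 := by
  simp [EuclideanSpace.norm_eq, Real.sqrt_le_left hR, sq_abs]

lemma volume_setOf_sum_sq_le {ι : Type*} [Fintype ι] {c : ℝ} (hc : 0 ≤ c) :
    volume {y : ι → ℝ | ∑ i, y i ^ 2 ≤ c}
      = ENNReal.ofReal (√c ^ Fintype.card ι) *
          volume (closedBall (0 : EuclideanSpace ℝ ι) 1) := by
  have hball : WithLp.ofLp ⁻¹' {y : ι → ℝ | ∑ i, y i ^ 2 ≤ c}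
      = closedBall (0 : EuclideanSpace ℝ ι) √c := by
    ext x
    simp [EuclideanSpace.norm_le_iff_sum_sq_le (Real.sqrt_nonneg c), Real.sq_sqrt hc]
  rw [← (PiLp.volume_preserving_ofLp ι).measure_preimage
    (measurableSet_le (by fun_prop) measurable_const).nullMeasurableSet, hball,
    Measure.addHaar_closedBall' _ _ (Real.sqrt_nonneg c), finrank_euclideanSpace]

lemma volume_slice_sum_sq_le (m : ℕ) {R a t : ℝ} (hRa : -R ≤ a) (haR : a ≤ R) :
    volume {z : Fin m → ℝ | a ≤ t ∧ t ^ 2 + ∑ i, z i ^ 2 ≤ R ^ 2}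
      = (Icc a R).indicator (fun t ↦ ENNReal.ofReal (√(R ^ 2 - t ^ 2) ^ m) *
          volume (closedBall (0 : EuclideanSpace ℝ (Fin m)) 1)) t := by
  by_cases ht : t ∈ Icc a R
  · have hsq : t ^ 2 ≤ R ^ 2 := sq_le_sq' (hRa.trans ht.1) ht.2
    have hslice := volume_setOf_sum_sq_le (ι := Fin m) (c := R ^ 2 - t ^ 2) (by linarith)
    rw [Fintype.card_fin] at hslice
    rw [indicator_of_mem ht, ← hslice]
    congr 1
    ext z
    simp only [mem_ofPred_eq, ht.1, true_and]
    constructor <;> intro h <;> linarith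
  · rw [indicator_of_notMem ht, measure_eq_zero_iff_ae_notMem]
    refine ae_of_all _ fun z ⟨hat, hz⟩ ↦ ht ⟨hat, ?_⟩
    have := Finset.sum_nonneg fun i (_ : i ∈ Finset.univ) ↦ sq_nonneg (z i)
    nlinarith

lemma volume_pi_cap (m : ℕ) {R a : ℝ} (hRa : -R ≤ a) (haR : a ≤ R) :
    volume {y : Fin (m + 1) → ℝ | a ≤ y 0 ∧ ∑ i, y i ^ 2 ≤ R ^ 2}
      = ENNReal.ofReal (∫ t in a..R, √(R ^ 2 - t ^ 2) ^ m) *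
          volume (closedBall (0 : EuclideanSpace ℝ (Fin m)) 1) := by
  set T : Set (ℝ × (Fin m → ℝ)) := {p | a ≤ p.1 ∧ p.1 ^ 2 + ∑ i, p.2 i ^ 2 ≤ R ^ 2}
  have hT : MeasurableSet T :=
    (measurableSet_le measurable_const measurable_fst).inter <| measurableSet_le
      (f := fun p : ℝ × (Fin m → ℝ) ↦ p.1 ^ 2 + ∑ i, p.2 i ^ 2) (by fun_prop) measurable_const
  have hpre : {y : Fin (m + 1) → ℝ | a ≤ y 0 ∧ ∑ i, y i ^ 2 ≤ R ^ 2}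
      = MeasurableEquiv.piFinSuccAbove (fun _ ↦ ℝ) 0 ⁻¹' T := by
    ext y
    simp [T, Fin.sum_univ_succ, Fin.tail]
  have hcont : Continuous fun t : ℝ ↦ √(R ^ 2 - t ^ 2) ^ m := by fun_prop
  rw [hpre, (volume_preserving_piFinSuccAbove (fun _ ↦ ℝ) 0).measure_preimage
    hT.nullMeasurableSet, Measure.volume_eq_prod, Measure.prod_apply hT]
  simp only [T, preimage_ofPred_eq]
  simp_rw [volume_slice_sum_sq_le m hRa haR]
  rw [lintegral_indicator measurableSet_Icc,
    lintegral_mul_const _ hcont.measurable.ennreal_ofReal,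
    ← ofReal_integral_eq_lintegral_ofReal hcont.integrableOn_Icc
      (ae_of_all _ fun t ↦ by positivity),
    integral_Icc_eq_integral_Ioc, ← intervalIntegral.integral_of_le haR]

lemma exists_orthonormalBasis_apply_zero_eq {E : Type*} [NormedAddCommGroup E]
    [InnerProductSpace ℝ E] [FiniteDimensional ℝ E] {m : ℕ} (hE : finrank ℝ E = m + 1)
    {u : E} (hu : ‖u‖ = 1) : ∃ b : OrthonormalBasis (Fin (m + 1)) ℝ E, b 0 = u := by
  have hu' : Orthonormal ℝ (({0} : Set (Fin (m + 1))).domRestrict fun _ ↦ u) :=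
    ⟨fun _ ↦ hu, fun i j hij ↦ absurd (Subsingleton.elim i j) hij⟩
  obtain ⟨b, hb⟩ := hu'.exists_orthonormalBasis_extension_of_card_eq (by simpa using hE)
  exact ⟨b, hb 0 rfl⟩

lemma EuclideanSpace.volume_cap {m : ℕ} {u : EuclideanSpace ℝ (Fin (m + 1))} (hu : ‖u‖ = 1)
    {R a : ℝ} (hRa : -R ≤ a) (haR : a ≤ R) :
    volume {r : EuclideanSpace ℝ (Fin (m + 1)) | ‖r‖ ≤ R ∧ a ≤ ⟪r, u⟫}
      = ENNReal.ofReal (∫ t in a..R, √(R ^ 2 - t ^ 2) ^ m) *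
          volume (closedBall (0 : EuclideanSpace ℝ (Fin m)) 1) := by
  obtain ⟨b, hb⟩ := exists_orthonormalBasis_apply_zero_eq finrank_euclideanSpace_fin hu
  have hpre : {r : EuclideanSpace ℝ (Fin (m + 1)) | ‖r‖ ≤ R ∧ a ≤ ⟪r, u⟫}
      = (WithLp.ofLp ∘ b.repr) ⁻¹' {y | a ≤ y 0 ∧ ∑ i, y i ^ 2 ≤ R ^ 2} := by
    ext r
    rw [mem_preimage, Function.comp_apply, mem_ofPred_eq, mem_ofPred_eq, and_comm,
      ← b.repr.norm_map, EuclideanSpace.norm_le_iff_sum_sq_le (by linarith),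
      b.repr_apply_apply, hb, real_inner_comm]
  have hS : MeasurableSet {y : Fin (m + 1) → ℝ | a ≤ y 0 ∧ ∑ i, y i ^ 2 ≤ R ^ 2} :=
    (measurableSet_le measurable_const (measurable_pi_apply 0)).inter
      (measurableSet_le (f := fun y : Fin (m + 1) → ℝ ↦ ∑ i, y i ^ 2) (by fun_prop)
        measurable_const)
  rw [hpre, ((PiLp.volume_preserving_ofLp _).comp b.measurePreserving_repr).measure_preimage
    hS.nullMeasurableSet, volume_pi_cap m hRa haR]

lemma intervalIntegral.integral_neg_self_eq_two_mul_of_even {f : ℝ → ℝ} (hf : Continuous f)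
    (heven : ∀ x, f (-x) = f x) (a : ℝ) :
    ∫ x in -a..a, f x = 2 * ∫ x in 0..a, f x := by
  have hleft : ∫ x in -a..0, f x = ∫ x in 0..a, f x := by
    simpa [heven] using (intervalIntegral.integral_comp_neg (a := 0) (b := a) f).symm
  rw [← intervalIntegral.integral_add_adjacent_intervals (hf.intervalIntegrable _ 0)
    (hf.intervalIntegrable 0 a), hleft, two_mul]

lemma EuclideanSpace.volume_closedBall_one_succ (m : ℕ) :
    volume (closedBall (0 : EuclideanSpace ℝ (Fin (m + 1))) 1)
      = ENNReal.ofReal (2 * ∫ t in 0..1, √(1 - t ^ 2) ^ m) *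
          volume (closedBall (0 : EuclideanSpace ℝ (Fin m)) 1) := by
  set u := EuclideanSpace.single (0 : Fin (m + 1)) (1 : ℝ)
  have hu : ‖u‖ = 1 := by simp [u]
  have hball : closedBall (0 : EuclideanSpace ℝ (Fin (m + 1))) 1
      = {r | ‖r‖ ≤ 1 ∧ -1 ≤ ⟪r, u⟫} := by
    ext r
    simp only [mem_closedBall_zero_iff, mem_ofPred_eq, iff_self_and]
    intro hr
    have := abs_real_inner_le_norm r u
    rw [hu, mul_one] at this
    linarith [neg_abs_le ⟪r, u⟫]
  rw [hball, EuclideanSpace.volume_cap hu (by norm_num) (by norm_num), one_pow,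
    intervalIntegral.integral_neg_self_eq_two_mul_of_even (by fun_prop) (by simp)]

lemma MeasureTheory.Measure.addHaar_setOf_le_norm_lt {E : Type*} [NormedAddCommGroup E]
    [NormedSpace ℝ E] [MeasurableSpace E] [BorelSpace E] [FiniteDimensional ℝ E] [Nontrivial E]
    (μ : Measure E) [μ.IsAddHaarMeasure] {γ ε : ℝ} (hγ : 0 ≤ γ) (hγε : γ ≤ ε) :
    μ {r | γ ≤ ‖r‖ ∧ ‖r‖ < ε}
      = ENNReal.ofReal (ε ^ finrank ℝ E - γ ^ finrank ℝ E) * μ (ball 0 1) := by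
  have hshell : {r : E | γ ≤ ‖r‖ ∧ ‖r‖ < ε} = ball 0 ε \ ball 0 γ := by
    ext r
    simp only [mem_ofPred_eq, mem_sdiff, mem_ball_zero_iff, not_lt, and_comm]
  rw [hshell, measure_sdiff (ball_subset_ball hγε) measurableSet_ball.nullMeasurableSet
      measure_ball_lt_top.ne, Measure.addHaar_ball μ 0 (hγ.trans hγε),
    Measure.addHaar_ball μ 0 hγ, ← ENNReal.sub_mul fun _ _ ↦ measure_ball_lt_top.ne,
    ENNReal.ofReal_sub _ (by positivity)]

lemma integral_sqrt_sq_sub_sq_pow {R : ℝ} (hR : 0 < R) (m : ℕ) (a : ℝ) :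
    ∫ t in a..R, √(R ^ 2 - t ^ 2) ^ m = R ^ (m + 1) * ∫ t in a / R..1, √(1 - t ^ 2) ^ m := by
  have hscale : ∀ t : ℝ, √(R ^ 2 - (R * t) ^ 2) ^ m = R ^ m * √(1 - t ^ 2) ^ m := fun t ↦ by
    rw [show R ^ 2 - (R * t) ^ 2 = R ^ 2 * (1 - t ^ 2) by ring, Real.sqrt_mul (sq_nonneg R),
      Real.sqrt_sq hR.le, mul_pow]
  have h := intervalIntegral.smul_integral_comp_mul_left
    (fun t ↦ √(R ^ 2 - t ^ 2) ^ m) R (a := a / R) (b := 1)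
  rw [mul_div_cancel₀ a hR.ne', mul_one] at h
  simp only [hscale, intervalIntegral.integral_const_mul, smul_eq_mul] at h
  rw [← h]
  ring

lemma image_one_sub_sq_Ioc {c : ℝ} (hc : 0 ≤ c) :
    (fun x : ℝ ↦ 1 - x ^ 2) '' Ioc c 1 = Ico 0 (1 - c ^ 2) := by
  ext s
  constructor
  · rintro ⟨x, ⟨hcx, hx1⟩, rfl⟩
    constructor <;> nlinarith
  · rintro ⟨hs0, hs⟩
    refine ⟨√(1 - s), ⟨(Real.lt_sqrt hc).2 (by linarith), Real.sqrt_le_one.2 (by linarith)⟩, ?_⟩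
    dsimp only
    rw [Real.sq_sqrt (by nlinarith), sub_sub_cancel]

lemma integral_rpow_mul_one_sub_rpow_neg_half (m : ℕ) {c : ℝ} (hc : 0 ≤ c) (hc1 : c ≤ 1) :
    ∫ s in 0..1 - c ^ 2, s ^ ((m : ℝ) / 2) * (1 - s) ^ ((-1 : ℝ) / 2)
      = 2 * ∫ t in c..1, √(1 - t ^ 2) ^ m := by
  have hderiv :
      ∀ x ∈ Ioc c 1, HasDerivWithinAt (fun x : ℝ ↦ 1 - x ^ 2) (-(2 * x)) (Ioc c 1) x :=
    fun x _ ↦ by simpa using ((hasDerivAt_pow 2 x).const_sub 1).hasDerivWithinAt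
  have hinj : InjOn (fun x : ℝ ↦ 1 - x ^ 2) (Ioc c 1) := fun x hx y hy hxy ↦
    (pow_left_inj₀ (hc.trans hx.1.le) (hc.trans hy.1.le) two_ne_zero).1 (by simpa using hxy)
  have hintegrand : EqOn (fun x ↦ |-(2 * x)| • ((1 - x ^ 2) ^ ((m : ℝ) / 2) *
      (1 - (1 - x ^ 2)) ^ ((-1 : ℝ) / 2))) (fun x ↦ 2 * √(1 - x ^ 2) ^ m) (Ioc c 1) := by
    intro x ⟨hcx, hx1⟩
    have hx : 0 < x := hc.trans_lt hcx
    dsimp only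
    rw [sub_sub_cancel, Real.rpow_div_two_eq_sqrt _ (by nlinarith),
      Real.rpow_div_two_eq_sqrt _ (sq_nonneg x), Real.sqrt_sq hx.le, Real.rpow_natCast,
      Real.rpow_neg_one, abs_neg, abs_of_pos (by positivity), smul_eq_mul]
    field_simp
  -- Over `Ioc c 1`, to avoid `x = 0`: there the Jacobian vanishes while `s = 1` is the singularity
  -- of `(1 - s) ^ (-1/2)`, and the two integrands disagree.
  rw [intervalIntegral.integral_of_le (by nlinarith), intervalIntegral.integral_of_le hc1,
    integral_Ioc_eq_integral_Ioo, ← integral_Ico_eq_integral_Ioo, ← image_one_sub_sq_Ioc hc,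
    integral_image_eq_integral_abs_deriv_smul measurableSet_Ioc hderiv hinj,
    setIntegral_congr_fun measurableSet_Ioc hintegrand, integral_const_mul]

lemma regIncBeta_one_sub_sq (m : ℕ) {c : ℝ} (hc : 0 ≤ c) (hc1 : c ≤ 1) :
    regIncBeta (1 - c ^ 2) (((m : ℝ) + 2) / 2) (1 / 2)
      = (∫ t in c..1, √(1 - t ^ 2) ^ m) / ∫ t in 0..1, √(1 - t ^ 2) ^ m := by
  have hsub := integral_rpow_mul_one_sub_rpow_neg_half m (le_refl 0) zero_le_one
  rw [zero_pow two_ne_zero, sub_zero] at hsub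
  rw [regIncBeta, eulerBeta, show ((m : ℝ) + 2) / 2 - 1 = m / 2 by ring,
    show (1 : ℝ) / 2 - 1 = -1 / 2 by norm_num, hsub,
    integral_rpow_mul_one_sub_rpow_neg_half m hc hc1, mul_div_mul_left _ _ two_ne_zero]

/-- ε-VCP for linear models under uniform perturbations: the ratio of
the volume of the spherical cap `{r : ‖r‖ ≤ ε ∧ ⟪r, u⟫ ≥ γ}` to the volume of the
shell `{r : γ ≤ ‖r‖ < ε}` equals
`(1/2) · ε^n / (ε^n − γ^n) · I(1 − (γ/ε)²; (n+1)/2, 1/2)`. -/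
theorem eps_vcp_linear_uniform
    (n : ℕ) (hn : 1 ≤ n)
    (u : EuclideanSpace ℝ (Fin n)) (hu : ‖u‖ = 1)
    (γ ε : ℝ) (hγ : 0 < γ) (hγε : γ < ε) :
    (volume {r : EuclideanSpace ℝ (Fin n) | ‖r‖ ≤ ε ∧ γ ≤ ⟪r, u⟫}).toReal /
      (volume {r : EuclideanSpace ℝ (Fin n) | γ ≤ ‖r‖ ∧ ‖r‖ < ε}).toReal
    = (1 / 2) * (ε ^ n / (ε ^ n - γ ^ n)) *
        regIncBeta (1 - (γ / ε) ^ 2) (((n : ℝ) + 1) / 2) (1 / 2) := by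
  obtain ⟨m, rfl⟩ : ∃ m, n = m + 1 := ⟨n - 1, by omega⟩
  have hε : 0 < ε := hγ.trans hγε
  have hc : 0 ≤ γ / ε := by positivity
  have hc1 : γ / ε ≤ 1 := (div_le_one hε).2 hγε.le
  set v := volume (closedBall (0 : EuclideanSpace ℝ (Fin m)) 1)
  set J : ℝ → ℝ := fun c ↦ ∫ t in c..1, √(1 - t ^ 2) ^ m
  have hJc : 0 ≤ J (γ / ε) := intervalIntegral.integral_nonneg hc1 fun t _ ↦ by positivity
  have hJ0 : 0 < J 0 :=
    intervalIntegral.intervalIntegral_pos_of_pos_on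
      (Continuous.intervalIntegrable (by fun_prop) _ _)
      (fun t ht ↦ pow_pos (Real.sqrt_pos.2 (by nlinarith [ht.1, ht.2])) m) zero_lt_one
  have hv : 0 < v.toReal :=
    ENNReal.toReal_pos (measure_closedBall_pos volume 0 one_pos).ne' measure_closedBall_lt_top.ne
  have hpow : γ ^ (m + 1) < ε ^ (m + 1) := pow_lt_pow_left₀ hγε hγ.le m.succ_ne_zero
  have hcap : volume {r : EuclideanSpace ℝ (Fin (m + 1)) | ‖r‖ ≤ ε ∧ γ ≤ ⟪r, u⟫}
      = ENNReal.ofReal (ε ^ (m + 1) * J (γ / ε)) * v := by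
    rw [EuclideanSpace.volume_cap hu (by linarith) hγε.le, integral_sqrt_sq_sub_sq_pow hε]
  have hshell : volume {r : EuclideanSpace ℝ (Fin (m + 1)) | γ ≤ ‖r‖ ∧ ‖r‖ < ε}
      = ENNReal.ofReal ((ε ^ (m + 1) - γ ^ (m + 1)) * (2 * J 0)) * v := by
    rw [Measure.addHaar_setOf_le_norm_lt volume hγ.le hγε.le, finrank_euclideanSpace_fin,
      ← Measure.addHaar_unitClosedBall_eq_addHaar_unitBall,
      EuclideanSpace.volume_closedBall_one_succ,
      ← mul_assoc, ← ENNReal.ofReal_mul (by linarith)]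
  rw [hcap, hshell, ENNReal.toReal_mul, ENNReal.toReal_mul, ENNReal.toReal_ofReal (by positivity),
    ENNReal.toReal_ofReal (by nlinarith), show ((↑(m + 1) : ℝ) + 1) / 2 = ((m : ℝ) + 2) / 2 by
      push_cast; ring, regIncBeta_one_sub_sq m hc hc1]
  simp only [J]
  field_simp
end

section
/- (Spherical cap volume.) Let n ≥ 1, let u ∈ ℝ^n be a unit vector, and let 0 ≤ γ ≤ ε. Then the Lebesgue volume of the spherical cap {r ∈ ℝ^n : ‖r‖ ≤ ε and ⟨r, u⟩ ≥ γ} equals (1/2) · C_n · ε^n · I(1 − (γ/ε)²; (n+1)/2, 1/2), where C_n = π^(n/2) / Γ(n/2 + 1) is the volume of the unit n-ball. -/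
open RealInnerProductSpace MeasureTheory

/-! Rotate `u` to the first basis vector and slice the cap by the hyperplanes `r 0 = x`,
`γ ≤ x ≤ ε`: each slice is an `(n - 1)`-ball of radius `√(ε² - x²)`, so the volume is
`C_{n-1} ∫_γ^ε (ε² - x²)^((n-1)/2) dx`. The substitution `t = 1 - (x / ε)²` turns this integral
into `ε^n / 2` times an incomplete Beta integral, and `C_{n-1} = C_n / B((n+1)/2, 1/2)` by the
Beta–Gamma relation and `Γ(1/2) = √π`. -/

open Real Set

lemma sqrt_pow_eq_rpow {x : ℝ} (hx : 0 ≤ x) (m : ℕ) : √x ^ m = x ^ ((m : ℝ) / 2) := by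
  rw [sqrt_eq_rpow, ← rpow_natCast, ← rpow_mul hx]
  ring_nf

lemma eulerBeta_eq_Gamma {a b : ℝ} (ha : 0 < a) (hb : 0 < b) :
    eulerBeta a b = Gamma a * Gamma b / Gamma (a + b) := by
  have hcomplex : (eulerBeta a b : ℂ) = Complex.betaIntegral a b := by
    rw [eulerBeta, Complex.betaIntegral, ← intervalIntegral.integral_ofReal]
    refine intervalIntegral.integral_congr fun t ht => ?_
    rw [uIcc_of_le zero_le_one] at ht
    push_cast [Complex.ofReal_cpow ht.1, Complex.ofReal_cpow (sub_nonneg.2 ht.2)]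
    rfl
  have h := Complex.Gamma_mul_Gamma_eq_betaIntegral (s := a) (t := b)
    (by simpa using ha) (by simpa using hb)
  rw [← hcomplex, ← Complex.ofReal_add, Complex.Gamma_ofReal, Complex.Gamma_ofReal,
    Complex.Gamma_ofReal] at h
  have h' : Gamma a * Gamma b = Gamma (a + b) * eulerBeta a b := by exact_mod_cast h
  rw [h', mul_div_cancel_left₀ _ (Gamma_pos_of_pos (add_pos ha hb)).ne']

noncomputable def unitBallVolume (m : ℕ) : ℝ := π ^ ((m : ℝ) / 2) / Gamma ((m : ℝ) / 2 + 1)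

lemma unitBallVolume_pos (m : ℕ) : 0 < unitBallVolume m :=
  div_pos (rpow_pos_of_pos pi_pos _) (Gamma_pos_of_pos (by positivity))

lemma unitBallVolume_eq_div_eulerBeta (m : ℕ) :
    unitBallVolume m = unitBallVolume (m + 1) / eulerBeta (((m + 1 : ℕ) + 1) / 2) (1 / 2) := by
  have hΓ := Gamma_pos_of_pos (by positivity : (0 : ℝ) < m / 2 + 1)
  have hΓ' := Gamma_pos_of_pos (by positivity : (0 : ℝ) < (m + 1 : ℕ) / 2 + 1)
  rw [eulerBeta_eq_Gamma (by positivity) one_half_pos, Gamma_one_half_eq, unitBallVolume,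
    unitBallVolume, ← sqrt_pow_eq_rpow pi_pos.le, ← sqrt_pow_eq_rpow pi_pos.le,
    show ((m + 1 : ℕ) + 1) / 2 + 1 / 2 = ((m + 1 : ℕ) : ℝ) / 2 + 1 by push_cast; ring,
    show ((m + 1 : ℕ) + 1) / 2 = (m : ℝ) / 2 + 1 by push_cast; ring]
  field_simp
  ring

lemma volume_setOf_sum_sq_le_s5 (m : ℕ) {R : ℝ} (hR : 0 ≤ R) :
    volume {y : Fin m → ℝ | ∑ i, y i ^ 2 ≤ R}
      = ENNReal.ofReal (R ^ ((m : ℝ) / 2) * unitBallVolume m) := by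
  rcases Nat.eq_zero_or_pos m with rfl | hm
  · simp [unitBallVolume, hR, volume_pi]
  have : Nonempty (Fin m) := Fin.pos_iff_nonempty.mp hm
  have hball : {y : Fin m → ℝ | ∑ i, y i ^ 2 ≤ R}
      = WithLp.toLp 2 ⁻¹' Metric.closedBall (0 : EuclideanSpace ℝ (Fin m)) √R := by
    ext y
    simp [EuclideanSpace.norm_eq, Real.sqrt_le_sqrt_iff, *]
  rw [hball, (PiLp.volume_preserving_toLp (Fin m)).measure_preimage
    measurableSet_closedBall.nullMeasurableSet, EuclideanSpace.volume_closedBall,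
    Fintype.card_fin, ← ENNReal.ofReal_pow (sqrt_nonneg R), ← ENNReal.ofReal_mul (by positivity),
    sqrt_pow_eq_rpow hR, sqrt_pow_eq_rpow pi_pos.le, unitBallVolume]

lemma volume_setOf_sum_sq_le_sq_and_le_apply_zero (m : ℕ) {γ ε : ℝ} (hγ : 0 ≤ γ) (hε : 0 ≤ ε) :
    volume {x : Fin (m + 1) → ℝ | ∑ i, x i ^ 2 ≤ ε ^ 2 ∧ γ ≤ x 0}
      = ∫⁻ t in Icc γ ε, ENNReal.ofReal ((ε ^ 2 - t ^ 2) ^ ((m : ℝ) / 2) * unitBallVolume m) := by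
  set B : Set (ℝ × (Fin m → ℝ)) := {p | p.1 ^ 2 + ∑ i, p.2 i ^ 2 ≤ ε ^ 2 ∧ γ ≤ p.1}
  have hB : MeasurableSet B :=
    (measurableSet_le (f := fun p : ℝ × (Fin m → ℝ) => p.1 ^ 2 + ∑ i, p.2 i ^ 2)
      (by fun_prop) measurable_const).inter
      (measurableSet_le measurable_const measurable_fst)
  have hpre : {x : Fin (m + 1) → ℝ | ∑ i, x i ^ 2 ≤ ε ^ 2 ∧ γ ≤ x 0}
      = MeasurableEquiv.piFinSuccAbove (fun _ => ℝ) 0 ⁻¹' B := by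
    ext x
    simp [B, Fin.sum_univ_succ, Fin.insertNthEquiv, Fin.tail]
  have hslice : ∀ t, volume (Prod.mk t ⁻¹' B) = (Icc γ ε).indicator
      (fun t => ENNReal.ofReal ((ε ^ 2 - t ^ 2) ^ ((m : ℝ) / 2) * unitBallVolume m)) t := by
    intro t
    by_cases ht : t ∈ Icc γ ε
    · have : Prod.mk t ⁻¹' B = {y : Fin m → ℝ | ∑ i, y i ^ 2 ≤ ε ^ 2 - t ^ 2} := by
        ext y
        simp [B, ht.1, le_sub_iff_add_le']
      rw [indicator_of_mem ht, this, volume_setOf_sum_sq_le_s5 m (by nlinarith [ht.1, ht.2])]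
    · have : Prod.mk t ⁻¹' B = ∅ := by
        ext y
        simp only [B, mem_preimage, mem_ofPred_eq, mem_empty_iff_false, iff_false, not_and]
        intro hy hγt
        have : 0 ≤ ∑ i, y i ^ 2 := by positivity
        exact ht ⟨hγt, abs_le_of_sq_le_sq' (by linarith) hε |>.2⟩
      rw [indicator_of_notMem ht, this, measure_empty]
  rw [hpre, volume_pi, (measurePreserving_piFinSuccAbove (fun _ => volume) 0).measure_preimage
    hB.nullMeasurableSet, Measure.prod_apply hB, ← volume_pi, lintegral_congr hslice,
    lintegral_indicator measurableSet_Icc]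

/- Stated with lower integrals, the substitution needs no integrability of the singularity of
`(1 - t) ^ (-1/2)` at `t = 1`. -/
lemma lintegral_Icc_sub_sq_rpow (k : ℝ) {γ ε : ℝ} (hγ : 0 ≤ γ) (hγε : γ ≤ ε) :
    ∫⁻ x in Icc γ ε, ENNReal.ofReal ((ε ^ 2 - x ^ 2) ^ k)
      = ENNReal.ofReal ((ε ^ 2) ^ k * ε / 2) *
        ∫⁻ t in Icc 0 (1 - (γ / ε) ^ 2), ENNReal.ofReal (t ^ k * (1 - t) ^ (-(1 / 2 : ℝ))) := by
  rcases (hγ.trans hγε).eq_or_lt with rfl | hε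
  · obtain rfl : γ = 0 := le_antisymm hγε hγ
    simp
  set f : ℝ → ℝ := fun x => 1 - (x / ε) ^ 2
  have hanti : AntitoneOn f (Icc γ ε) := fun a ha b _ hab => by
    have : 0 ≤ a := hγ.trans ha.1
    simp only [f]
    gcongr
  have himage : f '' Icc γ ε = Icc 0 (1 - (γ / ε) ^ 2) := by
    rw [(by fun_prop : Continuous f).continuousOn.image_Icc_of_antitoneOn hγε hanti]
    simp [f, hε.ne']
  have hderiv : ∀ x ∈ Icc γ ε, HasDerivWithinAt f (-(2 * x / ε ^ 2)) (Icc γ ε) x := by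
    intro x _
    simp_rw [f, div_pow]
    exact ((hasDerivAt_pow 2 x).div_const (ε ^ 2)).const_sub 1
      |>.congr_deriv (by norm_num) |>.hasDerivWithinAt
  have hpoint : ∀ x ∈ Ioc γ ε, 2 * x / ε ^ 2 * ((f x) ^ k * (1 - f x) ^ (-(1 / 2 : ℝ)))
      = 2 / ((ε ^ 2) ^ k * ε) * (ε ^ 2 - x ^ 2) ^ k := by
    intro x hx
    have hx0 : 0 < x := hγ.trans_lt hx.1
    have hfx : f x = (ε ^ 2 - x ^ 2) / ε ^ 2 := by simp only [f]; field_simp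
    have hsq : (1 - f x) ^ (-(1 / 2 : ℝ)) = ε / x := by
      rw [show 1 - f x = (x / ε) ^ 2 by ring, rpow_neg (by positivity), ← sqrt_eq_rpow,
        sqrt_sq (by positivity), inv_div]
    rw [hsq, hfx, div_rpow (by nlinarith [hx.2]) (by positivity)]
    have : 0 < (ε ^ 2) ^ k := by positivity
    field_simp
  have hchange :
      ∫⁻ t in Icc 0 (1 - (γ / ε) ^ 2), ENNReal.ofReal (t ^ k * (1 - t) ^ (-(1 / 2 : ℝ)))
        = ENNReal.ofReal (2 / ((ε ^ 2) ^ k * ε)) *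
          ∫⁻ x in Icc γ ε, ENNReal.ofReal ((ε ^ 2 - x ^ 2) ^ k) := by
    rw [← himage, lintegral_image_eq_lintegral_deriv_mul_of_antitoneOn measurableSet_Icc hderiv
      hanti, ← lintegral_const_mul _ (by fun_prop), setLIntegral_congr Ioc_ae_eq_Icc.symm,
      setLIntegral_congr Ioc_ae_eq_Icc.symm]
    refine setLIntegral_congr_fun measurableSet_Ioc fun x hx => ?_
    have : 0 ≤ x := hγ.trans hx.1.le
    rw [neg_neg, ← ENNReal.ofReal_mul (by positivity), hpoint x hx,
      ENNReal.ofReal_mul (by positivity)]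
  rw [hchange, ← mul_assoc, ← ENNReal.ofReal_mul (by positivity), div_mul_div_cancel₀ two_ne_zero,
    div_self (by positivity), ENNReal.ofReal_one, one_mul]

lemma toReal_setLIntegral_Icc_ofReal {f : ℝ → ℝ} {a b : ℝ} (hab : a ≤ b) (hf : Measurable f)
    (hf₀ : ∀ x ∈ Icc a b, 0 ≤ f x) :
    (∫⁻ x in Icc a b, ENNReal.ofReal (f x)).toReal = ∫ x in a..b, f x := by
  rw [intervalIntegral.integral_of_le hab, ← integral_Icc_eq_integral_Ioc,
    integral_eq_lintegral_of_nonneg_ae ((ae_restrict_iff' measurableSet_Icc).2 (.of_forall hf₀))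
      hf.aestronglyMeasurable]

section SphericalCap

variable {E : Type*} [NormedAddCommGroup E] [InnerProductSpace ℝ E]

def sphericalCap (u : E) (γ ε : ℝ) : Set E := {r | ‖r‖ ≤ ε ∧ γ ≤ ⟪r, u⟫}

lemma isClosed_sphericalCap (u : E) (γ ε : ℝ) : IsClosed (sphericalCap u γ ε) := by
  rw [sphericalCap, ofPred_and]
  exact (isClosed_le continuous_norm continuous_const).inter
    (isClosed_le continuous_const (continuous_id.inner continuous_const))

lemma volume_sphericalCap_eq_of_norm_eq [FiniteDimensional ℝ E] [MeasurableSpace E]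
    [BorelSpace E] {u v : E} (h : ‖u‖ = ‖v‖) (γ ε : ℝ) :
    volume (sphericalCap u γ ε) = volume (sphericalCap v γ ε) := by
  set f := Submodule.reflection (ℝ ∙ (u - v))ᗮ
  have hfu : f u = v := Submodule.reflection_sub h
  have hpre : sphericalCap u γ ε = f ⁻¹' sphericalCap v γ ε := by
    ext r
    simp only [sphericalCap, mem_preimage, mem_ofPred_eq, f.norm_map, ← hfu, f.inner_map_map]
  rw [hpre, f.measurePreserving.measure_preimage
    (isClosed_sphericalCap v γ ε).measurableSet.nullMeasurableSet]

end SphericalCap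

lemma volume_sphericalCap_single_zero (m : ℕ) {γ ε : ℝ} (hε : 0 ≤ ε) :
    volume (sphericalCap (EuclideanSpace.single 0 1 : EuclideanSpace ℝ (Fin (m + 1))) γ ε)
      = volume {x : Fin (m + 1) → ℝ | ∑ i, x i ^ 2 ≤ ε ^ 2 ∧ γ ≤ x 0} := by
  rw [← (PiLp.volume_preserving_ofLp (Fin (m + 1))).measure_preimage]
  · congr 1
    ext r
    simp [sphericalCap, EuclideanSpace.norm_eq, EuclideanSpace.inner_single_right,
      ← sq_le_sq₀ (sqrt_nonneg _) hε, sq_sqrt (by positivity : 0 ≤ ∑ i, r i ^ 2)]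
  · exact ((measurableSet_le (f := fun x : Fin (m + 1) → ℝ => ∑ i, x i ^ 2) (by fun_prop)
      measurable_const).inter
      (measurableSet_le measurable_const (measurable_pi_apply 0))).nullMeasurableSet

lemma toReal_volume_sphericalCap (m : ℕ) {u : EuclideanSpace ℝ (Fin (m + 1))} (hu : ‖u‖ = 1)
    {γ ε : ℝ} (hγ : 0 ≤ γ) (hγε : γ ≤ ε) :
    (volume (sphericalCap u γ ε)).toReal = unitBallVolume m * ε ^ (m + 1) / 2 *
      ∫ t in 0..1 - (γ / ε) ^ 2, t ^ ((m : ℝ) / 2) * (1 - t) ^ (-(1 / 2 : ℝ)) := by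
  have hε : 0 ≤ ε := hγ.trans hγε
  have hT : 1 - (γ / ε) ^ 2 ∈ Icc 0 1 :=
    ⟨sub_nonneg.2 (pow_le_one₀ (by positivity) (div_le_one_of_le₀ hγε hε)),
      sub_le_self _ (sq_nonneg _)⟩
  have hunit : ‖u‖ = ‖(EuclideanSpace.single 0 1 : EuclideanSpace ℝ (Fin (m + 1)))‖ := by
    simp [hu]
  simp_rw [volume_sphericalCap_eq_of_norm_eq hunit, volume_sphericalCap_single_zero m hε,
    volume_setOf_sum_sq_le_sq_and_le_apply_zero m hγ hε,
    ENNReal.ofReal_mul' (unitBallVolume_pos m).le]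
  rw [lintegral_mul_const _ (by fun_prop), lintegral_Icc_sub_sq_rpow _ hγ hγε, ENNReal.toReal_mul,
    ENNReal.toReal_mul, ENNReal.toReal_ofReal (unitBallVolume_pos m).le,
    ENNReal.toReal_ofReal (div_nonneg (mul_nonneg (by positivity) hε) zero_le_two),
    toReal_setLIntegral_Icc_ofReal hT.1 (by fun_prop) fun t ht => ?_,
    ← sqrt_pow_eq_rpow (sq_nonneg ε), sqrt_sq hε]
  · ring
  · exact mul_nonneg (rpow_nonneg ht.1 _) (rpow_nonneg (by linarith [ht.2, hT.2]) _)

theorem spherical_cap_volume_general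
    (n : ℕ)
    (u : EuclideanSpace ℝ (Fin n)) (hu : ‖u‖ = 1)
    (γ ε : ℝ) (hγ : 0 ≤ γ) (hγε : γ ≤ ε) :
    (volume {r : EuclideanSpace ℝ (Fin n) | ‖r‖ ≤ ε ∧ γ ≤ ⟪r, u⟫}).toReal
    = (1 / 2) * (Real.pi ^ ((n : ℝ) / 2) / Real.Gamma ((n : ℝ) / 2 + 1)) * ε ^ n *
        regIncBeta (1 - (γ / ε) ^ 2) (((n : ℝ) + 1) / 2) (1 / 2) := by
  obtain ⟨m, rfl⟩ : ∃ m, n = m + 1 := Nat.exists_eq_add_one.2 <| Fin.pos_iff_nonempty.2 <| by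
    by_contra! h
    simp [Subsingleton.elim u 0] at hu
  have hexp : ((↑(m + 1) : ℝ) + 1) / 2 - 1 = m / 2 := by push_cast; ring
  rw [show {r | ‖r‖ ≤ ε ∧ γ ≤ ⟪r, u⟫} = sphericalCap u γ ε from rfl,
    toReal_volume_sphericalCap m hu hγ hγε, unitBallVolume_eq_div_eulerBeta, regIncBeta, hexp,
    show (1 / 2 : ℝ) - 1 = -(1 / 2) by norm_num, unitBallVolume]
  ring

/-- spherical cap volume: the Lebesgue volume of the spherical cap
`{r ∈ ℝ^n : ‖r‖ ≤ ε ∧ ⟪r, u⟫ ≥ γ}`, for a unit vector `u` and `0 ≤ γ ≤ ε`, equals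
`(1/2) · C_n · ε^n · I(1 − (γ/ε)²; (n+1)/2, 1/2)` where `C_n = π^(n/2) / Γ(n/2 + 1)`
is the volume of the unit n-ball. -/
theorem spherical_cap_volume
    (n : ℕ) (hn : 1 ≤ n)
    (u : EuclideanSpace ℝ (Fin n)) (hu : ‖u‖ = 1)
    (γ ε : ℝ) (hγ : 0 ≤ γ) (hγε : γ ≤ ε) :
    (volume {r : EuclideanSpace ℝ (Fin n) | ‖r‖ ≤ ε ∧ γ ≤ ⟪r, u⟫}).toReal
    = (1 / 2) * (Real.pi ^ ((n : ℝ) / 2) / Real.Gamma ((n : ℝ) / 2 + 1)) * ε ^ n *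
        regIncBeta (1 - (γ / ε) ^ 2) (((n : ℝ) + 1) / 2) (1 / 2) :=
  spherical_cap_volume_general n u hu γ ε hγ hγε
end

section
/- Fix an integer n ≥ 2 and ε > 0, and define g : (0, ε) → ℝ by g(γ) = (1/2) · ε^n / (ε^n − γ^n) · I(1 − (γ/ε)²; (n+1)/2, 1/2). Then lim_{γ → ε⁻} g(γ) = 0. -/
open MeasureTheory Filter

/-! Since `a = (n + 1) / 2 > 1`, the integrand `t ^ (a - 1) * (1 - t) ^ (b - 1)` is continuous and
vanishes at `0`, so by the fundamental theorem of calculus `I(x; a, b) = o(x)` as `x → 0`.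
With `q = γ / ε` and `x = 1 - q ^ 2`, the prefactor `ε ^ n / (ε ^ n - γ ^ n) = 1 / (1 - q ^ n)` is at
most `2 / x`, because `1 - q ^ 2 ≤ 2 * (1 - q) ≤ 2 * (1 - q ^ n)`. Hence `|g γ| ≤ |I(x) / x| → 0`. -/

open Set Topology

lemma regIncBeta_hasDerivAt_zero {a : ℝ} (ha : 1 < a) (b : ℝ) :
    HasDerivAt (fun x => regIncBeta x a b) 0 0 := by
  set f : ℝ → ℝ := fun t => t ^ (a - 1) * (1 - t) ^ (b - 1)
  have hf : ContinuousOn f (Iio 1) := fun t ht =>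
    ((Real.continuousAt_rpow_const _ _ (Or.inr (by linarith))).mul
      ((continuousAt_const.sub continuousAt_id).rpow_const
        (Or.inl (sub_ne_zero.2 (ne_of_gt ht))))).continuousWithinAt
  have hf0 : f 0 = 0 := by simp [f, Real.zero_rpow (by linarith : a - 1 ≠ 0)]
  have := intervalIntegral.integral_hasDerivAt_right (IntervalIntegrable.refl (a := 0))
    (hf.stronglyMeasurableAtFilter isOpen_Iio 0 (by norm_num))
    (hf.continuousAt (Iio_mem_nhds one_pos))
  rw [hf0] at this
  simpa [regIncBeta] using this.div_const (eulerBeta a b)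

lemma tendsto_regIncBeta_div_self {a : ℝ} (ha : 1 < a) (b : ℝ) :
    Tendsto (fun x => regIncBeta x a b / x) (𝓝[≠] 0) (𝓝 0) := by
  have hslope : slope (fun x => regIncBeta x a b) 0 = fun x => regIncBeta x a b / x := by
    ext x
    simp [slope_def_field, regIncBeta]
  simpa [hslope] using (regIncBeta_hasDerivAt_zero ha b).tendsto_slope

lemma div_mem_Ioo_zero_one {ε γ : ℝ} (hγ : γ ∈ Ioo 0 ε) : γ / ε ∈ Ioo 0 1 :=
  ⟨div_pos hγ.1 (hγ.1.trans hγ.2), (div_lt_one (hγ.1.trans hγ.2)).2 hγ.2⟩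

lemma one_sub_sq_le_two_mul_one_sub_pow {q : ℝ} (hq0 : 0 ≤ q) (hq1 : q ≤ 1) {n : ℕ}
    (hn : n ≠ 0) : 1 - q ^ 2 ≤ 2 * (1 - q ^ n) := by
  nlinarith [pow_le_of_le_one hq0 hq1 hn]

lemma abs_half_div_sub_pow_mul_le_one {n : ℕ} (hn : n ≠ 0) {ε γ : ℝ} (hγ : γ ∈ Ioo 0 ε) :
    |1 / 2 * (ε ^ n / (ε ^ n - γ ^ n)) * (1 - (γ / ε) ^ 2)| ≤ 1 := by
  obtain ⟨hq0, hq1⟩ := div_mem_Ioo_zero_one hγ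
  have hε : ε ≠ 0 := (hγ.1.trans hγ.2).ne'
  have hqn : 0 < 1 - (γ / ε) ^ n := sub_pos.2 (pow_lt_one₀ hq0.le hq1 hn)
  have hsq : 0 ≤ 1 - (γ / ε) ^ 2 := by nlinarith
  have hfactor : 1 / 2 * (ε ^ n / (ε ^ n - γ ^ n)) * (1 - (γ / ε) ^ 2)
      = (1 - (γ / ε) ^ 2) / (2 * (1 - (γ / ε) ^ n)) := by
    have hden : ε ^ n - γ ^ n ≠ 0 := (sub_pos.2 (pow_lt_pow_left₀ hγ.2 hγ.1.le hn)).ne'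
    simp only [div_pow]
    field_simp
  rw [hfactor, abs_of_nonneg (div_nonneg hsq (by positivity)), div_le_one (by positivity)]
  exact one_sub_sq_le_two_mul_one_sub_pow hq0.le hq1.le hn

/-- for `n ≥ 2`, with
`g(γ) = (1/2) · ε^n / (ε^n − γ^n) · I(1 − (γ/ε)²; (n+1)/2, 1/2)` on `(0, ε)`,
one has `g(γ) → 0` as `γ → ε⁻`. -/
theorem g_tendsto_zero_at_eps
    (n : ℕ) (hn : 2 ≤ n) (ε : ℝ) (hε : 0 < ε) :
    Tendsto
      (fun γ : ℝ => (1 / 2) * (ε ^ n / (ε ^ n - γ ^ n)) *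
        regIncBeta (1 - (γ / ε) ^ 2) (((n : ℝ) + 1) / 2) (1 / 2))
      (nhdsWithin ε (Set.Ioo 0 ε)) (nhds 0) := by
  have ha : 1 < ((n : ℝ) + 1) / 2 := by
    have : (2 : ℝ) ≤ n := by exact_mod_cast hn
    linarith
  have hx_ne : ∀ γ ∈ Ioo 0 ε, 1 - (γ / ε) ^ 2 ≠ 0 := fun γ hγ => by
    obtain ⟨hq0, hq1⟩ := div_mem_Ioo_zero_one hγ
    nlinarith
  have hx : Tendsto (fun γ : ℝ => 1 - (γ / ε) ^ 2) (𝓝[Ioo 0 ε] ε) (𝓝[≠] 0) := by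
    refine tendsto_nhdsWithin_of_tendsto_nhds_of_eventually_within _ ?_
      (eventually_nhdsWithin_of_forall hx_ne)
    exact ((by fun_prop : Continuous fun γ : ℝ => 1 - (γ / ε) ^ 2).tendsto' ε 0
      (by simp [hε.ne'])).mono_left nhdsWithin_le_nhds
  refine squeeze_zero_norm' ?_ (tendsto_zero_iff_norm_tendsto_zero.1
    ((tendsto_regIncBeta_div_self ha (1 / 2)).comp hx))
  filter_upwards [self_mem_nhdsWithin] with γ hγ
  rw [Function.comp_apply, Real.norm_eq_abs, Real.norm_eq_abs]
  calc _ = |1 / 2 * (ε ^ n / (ε ^ n - γ ^ n)) * (1 - (γ / ε) ^ 2)|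
        * |regIncBeta (1 - (γ / ε) ^ 2) (((n : ℝ) + 1) / 2) (1 / 2) / (1 - (γ / ε) ^ 2)| := by
        rw [← abs_mul, mul_assoc _ (1 - _), mul_div_cancel₀ _ (hx_ne γ hγ)]
    _ ≤ _ := mul_le_of_le_one_left (abs_nonneg _)
        (abs_half_div_sub_pow_mul_le_one (by omega) hγ)
end

section
/- (Monotonicity of the average ε-VCP bound.) Fix an integer n ≥ 2 and ε > 0, and define g : (0, ε) → ℝ by g(γ) = (1/2) · ε^n / (ε^n − γ^n) · I(1 − (γ/ε)²; (n+1)/2, 1/2). Then g is monotonically (strictly) decreasing on (0, ε). -/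
/-!
With `x = γ / ε`, the substitution `t = 1 - s²` gives
`I(1 - x²; (n+1)/2, 1/2) = (2 / B) ∫ₓ¹ (1 - s²)^((n-1)/2) ds`,
while `1 - xⁿ = n ∫ₓ¹ s^(n-1) ds`.
Hence `g(γ) = ∫ₓ¹ φ / (n B ∫ₓ¹ ψ)` with `φ(s) = (1 - s²)^((n-1)/2)` and `ψ(s) = s^(n-1)`.
Since `φ / ψ = (s⁻² - 1)^((n-1)/2)` is strictly decreasing, so is this ratio of tail integrals.
-/

open MeasureTheory

open Set intervalIntegral

theorem intervalIntegrable_rpow_mul_one_sub_rpow {a b : ℝ} (ha : 0 < a) (hb : 0 < b) :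
    IntervalIntegrable (fun t ↦ t ^ (a - 1) * (1 - t) ^ (b - 1)) volume 0 1 := by
  have hleft : IntervalIntegrable (fun t : ℝ ↦ t ^ (a - 1)) volume 0 (1 / 2) :=
    intervalIntegrable_rpow' (by linarith)
  have hright : IntervalIntegrable (fun t : ℝ ↦ (1 - t) ^ (b - 1)) volume (1 / 2) 1 := by
    have := (intervalIntegrable_rpow' (a := 0) (b := 1 / 2) (r := b - 1)
      (by linarith)).comp_sub_left 1
    norm_num at this
    exact this.symm
  refine (hleft.mul_continuousOn ?_).trans (hright.continuousOn_mul ?_)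
  · refine fun t ht ↦ (ContinuousAt.rpow_const (f := fun t ↦ 1 - t) (by fun_prop)
      (Or.inl ?_)).continuousWithinAt
    rw [uIcc_of_le (by norm_num)] at ht
    exact sub_ne_zero.2 (by linarith [ht.2])
  · refine fun t ht ↦ (Real.continuousAt_rpow_const t _ (Or.inl ?_)).continuousWithinAt
    rw [uIcc_of_le (by norm_num)] at ht
    linarith [ht.1]

theorem eulerBeta_pos {a b : ℝ} (ha : 0 < a) (hb : 0 < b) : 0 < eulerBeta a b :=
  intervalIntegral_pos_of_pos_on (intervalIntegrable_rpow_mul_one_sub_rpow ha hb)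
    (fun _ ht ↦ mul_pos (Real.rpow_pos_of_pos ht.1 _) (Real.rpow_pos_of_pos (sub_pos.2 ht.2) _))
    one_pos

theorem integral_rpow_mul_one_sub_rpow_half_sub_one {c x : ℝ} (hc : 0 ≤ c) (hx : 0 < x) :
    ∫ t in (0 : ℝ)..1 - x ^ 2, t ^ c * (1 - t) ^ ((1 : ℝ) / 2 - 1) =
      2 * ∫ s in x..1, (1 - s ^ 2) ^ c := by
  have hpos : ∀ s ∈ uIcc x 1, 0 < s := fun s hs ↦ (lt_min hx one_pos).trans_le hs.1
  have hsubst := integral_comp_mul_deriv' (a := x) (b := 1)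
    (f := fun s ↦ 1 - s ^ 2) (f' := fun s ↦ -(2 * s))
    (g := fun t ↦ t ^ c * (1 - t) ^ ((1 : ℝ) / 2 - 1))
    (fun s _ ↦ by simpa using (hasDerivAt_pow 2 s).const_sub 1) (by fun_prop) ?_
  · rw [one_pow, sub_self] at hsubst
    rw [← intervalIntegral.integral_const_mul, integral_symm, ← hsubst,
      ← intervalIntegral.integral_neg]
    refine integral_congr fun s hs ↦ ?_
    have hsq : (s ^ 2) ^ ((1 : ℝ) / 2 - 1) = s⁻¹ := by
      rw [← Real.rpow_natCast, ← Real.rpow_mul (hpos s hs).le]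
      norm_num [Real.rpow_neg_one]
    simp only [Function.comp_apply, sub_sub_cancel, hsq]
    field_simp [(hpos s hs).ne']
  · rintro _ ⟨s, hs, rfl⟩
    refine ((Real.continuousAt_rpow_const _ _ (Or.inr hc)).mul
      (ContinuousAt.rpow_const (f := fun t ↦ 1 - t) (by fun_prop)
        (Or.inl ?_))).continuousWithinAt
    have := hpos s hs
    simp only [sub_sub_cancel]
    positivity

theorem strictAntiOn_integral_div_integral {φ ψ : ℝ → ℝ} {a b : ℝ}
    (hφ : ContinuousOn φ (Ioc a b)) (hψ : ContinuousOn ψ (Ioc a b))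
    (hψ_pos : ∀ s ∈ Ioc a b, 0 < ψ s)
    (hratio : StrictAntiOn (fun s ↦ φ s / ψ s) (Ioc a b)) :
    StrictAntiOn (fun x ↦ (∫ s in x..b, φ s) / ∫ s in x..b, ψ s) (Ioo a b) := by
  intro x hx y hy hxy
  have hy' : y ∈ Ioc a b := Ioo_subset_Ioc_self hy
  have hb : b ∈ Ioc a b := ⟨hy.1.trans hy.2, le_rfl⟩
  have hxy_sub : Icc x y ⊆ Ioc a b := fun s hs ↦ ⟨hx.1.trans_le hs.1, hs.2.trans hy.2.le⟩
  have hyb_sub : Icc y b ⊆ Ioc a b := fun s hs ↦ ⟨hy.1.trans_le hs.1, hs.2⟩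
  have hψxy : IntervalIntegrable ψ volume x y :=
    (hψ.mono hxy_sub).intervalIntegrable_of_Icc hxy.le
  have hψyb : IntervalIntegrable ψ volume y b :=
    (hψ.mono hyb_sub).intervalIntegrable_of_Icc hy.2.le
  -- With `r = (φ / ψ) y`: `φ ≥ r ψ` on `[x, y]` and `φ ≤ r ψ` on `[y, b]`,
  -- strictly at `x` and at `b`; the claim is then a mediant inequality.
  set r := φ y / ψ y
  have hA : r * ∫ s in x..y, ψ s < ∫ s in x..y, φ s := by
    rw [← intervalIntegral.integral_const_mul]
    refine integral_lt_integral_of_continuousOn_of_le_of_exists_lt hxy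
      (continuousOn_const.mul (hψ.mono hxy_sub)) (hφ.mono hxy_sub) (fun s hs ↦ ?_)
      ⟨x, left_mem_Icc.2 hxy.le, ?_⟩
    · have hs' := hxy_sub (Ioc_subset_Icc_self hs)
      exact (le_div_iff₀ (hψ_pos s hs')).1 (hratio.antitoneOn hs' hy' hs.2)
    · have hx' := hxy_sub (left_mem_Icc.2 hxy.le)
      exact (lt_div_iff₀ (hψ_pos x hx')).1 (hratio hx' hy' hxy)
  have hP : ∫ s in y..b, φ s < r * ∫ s in y..b, ψ s := by
    rw [← intervalIntegral.integral_const_mul]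
    refine integral_lt_integral_of_continuousOn_of_le_of_exists_lt hy.2
      (hφ.mono hyb_sub) (continuousOn_const.mul (hψ.mono hyb_sub)) (fun s hs ↦ ?_)
      ⟨b, right_mem_Icc.2 hy.2.le, (div_lt_iff₀ (hψ_pos b hb)).1 (hratio hy' hb hy.2)⟩
    have hs' := hyb_sub (Ioc_subset_Icc_self hs)
    exact (div_le_iff₀ (hψ_pos s hs')).1 (hratio.antitoneOn hy' hs' hs.1.le)
  have hC : 0 < ∫ s in x..y, ψ s :=
    intervalIntegral_pos_of_pos_on hψxy
      (fun s hs ↦ hψ_pos s (hxy_sub (Ioo_subset_Icc_self hs))) hxy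
  have hQ : 0 < ∫ s in y..b, ψ s :=
    intervalIntegral_pos_of_pos_on hψyb
      (fun s hs ↦ hψ_pos s (hyb_sub (Ioo_subset_Icc_self hs))) hy.2
  simp only
  rw [← integral_add_adjacent_intervals ((hφ.mono hxy_sub).intervalIntegrable_of_Icc hxy.le)
      ((hφ.mono hyb_sub).intervalIntegrable_of_Icc hy.2.le),
    ← integral_add_adjacent_intervals hψxy hψyb, div_lt_div_iff₀ hQ (add_pos hC hQ)]
  nlinarith [mul_lt_mul_of_pos_left hP hC, mul_lt_mul_of_pos_left hA hQ]

theorem strictAntiOn_one_sub_sq_rpow_div_rpow {c : ℝ} (hc : 0 < c) :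
    StrictAntiOn (fun s : ℝ ↦ (1 - s ^ 2) ^ c / s ^ (2 * c)) (Ioc 0 1) := by
  intro s hs t ht hst
  have hsq : ∀ u : ℝ, 0 < u → u ^ (2 * c) = (u ^ 2) ^ c := fun u hu ↦ by
    rw [Real.rpow_mul hu.le, Real.rpow_two]
  have hs2 : 0 ≤ 1 - s ^ 2 := sub_nonneg.2 (pow_le_one₀ hs.1.le hs.2)
  have ht2 : 0 ≤ 1 - t ^ 2 := sub_nonneg.2 (pow_le_one₀ ht.1.le ht.2)
  simp only
  rw [hsq s hs.1, hsq t ht.1, ← Real.div_rpow ht2 (by positivity),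
    ← Real.div_rpow hs2 (by positivity)]
  refine Real.rpow_lt_rpow (div_nonneg ht2 (by positivity)) ?_ hc
  rw [div_lt_div_iff₀ (by nlinarith [ht.1]) (by nlinarith [hs.1])]
  nlinarith [mul_lt_mul'' hst hst hs.1.le hs.1.le]

theorem strictAntiOn_regIncBeta_one_sub_sq_div_one_sub_pow {n : ℕ} (hn : 1 < n) :
    StrictAntiOn
      (fun x : ℝ ↦ regIncBeta (1 - x ^ 2) (((n : ℝ) + 1) / 2) (1 / 2) / (1 - x ^ n))
      (Ioo 0 1) := by
  have hn' : (1 : ℝ) < n := by exact_mod_cast hn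
  set c : ℝ := ((n : ℝ) + 1) / 2 - 1 with hc_def
  have hc : 0 < c := by rw [hc_def]; linarith
  have hB := eulerBeta_pos (a := ((n : ℝ) + 1) / 2) (b := 1 / 2) (by positivity) (by norm_num)
  have hratio := strictAntiOn_integral_div_integral (a := 0) (b := 1)
    (φ := fun s ↦ (1 - s ^ 2) ^ c) (ψ := fun s ↦ s ^ (2 * c))
    ((Real.continuous_rpow_const hc.le).comp (by fun_prop)).continuousOn
    (Real.continuous_rpow_const (by positivity)).continuousOn
    (fun s hs ↦ Real.rpow_pos_of_pos hs.1 _) (strictAntiOn_one_sub_sq_rpow_div_rpow hc)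
  have hψ : ∀ x : ℝ, ∫ s in x..1, s ^ (2 * c) = (1 - x ^ n) / n := fun x ↦ by
    rw [integral_rpow (Or.inl (by linarith)), show 2 * c + 1 = n by ring, Real.one_rpow,
      Real.rpow_natCast]
  have hform : ∀ x ∈ Ioo (0 : ℝ) 1,
      regIncBeta (1 - x ^ 2) (((n : ℝ) + 1) / 2) (1 / 2) / (1 - x ^ n) =
        2 / (n * eulerBeta (((n : ℝ) + 1) / 2) (1 / 2)) *
          ((∫ s in x..1, (1 - s ^ 2) ^ c) / ∫ s in x..1, s ^ (2 * c)) := fun x hx ↦ by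
    have hxn : x ^ n < 1 := pow_lt_one₀ hx.1.le hx.2 (by omega)
    rw [regIncBeta, integral_rpow_mul_one_sub_rpow_half_sub_one hc.le hx.1, hψ x]
    field_simp [(sub_pos.2 hxn).ne']
  intro x hx y hy hxy
  simp only [hform x hx, hform y hy]
  exact mul_lt_mul_of_pos_left (hratio hx hy hxy) (by positivity)

/-- monotonicity of the average ε-VCP bound: for `n ≥ 2` and `ε > 0`,
`g(γ) = (1/2) · ε^n / (ε^n − γ^n) · I(1 − (γ/ε)²; (n+1)/2, 1/2)` is strictly
decreasing on `(0, ε)`. -/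
theorem g_strictAntiOn
    (n : ℕ) (hn : 2 ≤ n) (ε : ℝ) (hε : 0 < ε) :
    StrictAntiOn
      (fun γ : ℝ => (1 / 2) * (ε ^ n / (ε ^ n - γ ^ n)) *
        regIncBeta (1 - (γ / ε) ^ 2) (((n : ℝ) + 1) / 2) (1 / 2))
      (Set.Ioo 0 ε) := by
  have hscaled : ∀ γ I : ℝ,
      1 / 2 * (ε ^ n / (ε ^ n - γ ^ n)) * I = I / (1 - (γ / ε) ^ n) / 2 := fun γ I ↦ by
    rw [div_pow, one_sub_div (pow_pos hε n).ne', div_div_eq_mul_div]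
    ring
  have hmaps : MapsTo (· / ε) (Ioo 0 ε) (Ioo 0 1) := fun γ hγ ↦
    ⟨div_pos hγ.1 hε, (div_lt_one hε).2 hγ.2⟩
  intro γ hγ δ hδ hγδ
  have := strictAntiOn_regIncBeta_one_sub_sq_div_one_sub_pow hn (hmaps hγ) (hmaps hδ)
    (div_lt_div_of_pos_right hγδ hε)
  simp only [hscaled] at this ⊢
  linarith
end
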